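/- The equality relation on formulae (generated by associativity, commutativity, and unit laws) is decidable, and any two equal formulae have a common canonical form reachable in O(n²) rewrite steps, where n is the total size; moreover each rewrite step does not increase formula size. -/

import Mathlib

/-- Formulae of the calculus of structures in negation normal form. -/
inductive Formula : Type
  | top : Formula
  | bot : Formula
  | atom : ℕ → Formula
  | natom : ℕ → Formula
  | or : Formula → Formula → Formula
  | and : Formula → Formula → Formula
deriving DecidableEq

/-- Boolean evaluation of a formula under an assignment. -/
def Formula.eval (v : ℕ → Bool) : Formula → Bool
  | .top => true
  | .bot => false
  | .atom n => v n
  | .natom n => !(v n)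
  | .or a b => a.eval v || b.eval v
  | .and a b => a.eval v && b.eval v

/-- Size of a formula: number of unit and atom occurrences. -/
def Formula.size : Formula → ℕ
  | .top => 1
  | .bot => 1
  | .atom _ => 1
  | .natom _ => 1
  | .or a b => a.size + b.size
  | .and a b => a.size + b.size

/-- De Morgan dual (negation in negation normal form). -/
def Formula.dual : Formula → Formula
  | .top => .bot
  | .bot => .top
  | .atom n => .natom n
  | .natom n => .atom n
  | .or a b => .and a.dual b.dual
  | .and a b => .or a.dual b.dual

/-- The equality relation `=` on formulae: commutativity, associativity, unit
laws, closed under reflexivity, symmetry, transitivity and context closure. -/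
inductive FEq : Formula → Formula → Prop
  | orComm (a b) : FEq (.or a b) (.or b a)
  | andComm (a b) : FEq (.and a b) (.and b a)
  | orAssoc (a b c) : FEq (.or (.or a b) c) (.or a (.or b c))
  | andAssoc (a b c) : FEq (.and (.and a b) c) (.and a (.and b c))
  | orBot (a) : FEq (.or a .bot) a
  | andTop (a) : FEq (.and a .top) a
  | topTop : FEq (.or .top .top) .top
  | botBot : FEq (.and .bot .bot) .bot
  | refl (a) : FEq a a
  | symm {a b} : FEq a b → FEq b a
  | trans {a b c} : FEq a b → FEq b c → FEq a c
  | orCongL {a b} (c) : FEq a b → FEq (.or a c) (.or b c)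
  | orCongR {a b} (c) : FEq a b → FEq (.or c a) (.or c b)
  | andCongL {a b} (c) : FEq a b → FEq (.and a c) (.and b c)
  | andCongR {a b} (c) : FEq a b → FEq (.and c a) (.and c b)

/-- Closure of a rule relation under arbitrary formula contexts. -/
inductive CtxStep (R : Formula → Formula → Prop) : Formula → Formula → Prop
  | base {a b} : R a b → CtxStep R a b
  | orL {a b} (c) : CtxStep R a b → CtxStep R (.or a c) (.or b c)
  | orR {a b} (c) : CtxStep R a b → CtxStep R (.or c a) (.or c b)
  | andL {a b} (c) : CtxStep R a b → CtxStep R (.and a c) (.and b c)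
  | andR {a b} (c) : CtxStep R a b → CtxStep R (.and c a) (.and c b)

/-- `Deriv R α β l s`: there is a derivation from premiss `α` to conclusion `β`
using rules from `R` (applied inside contexts), of length `l` and total size `s`
(the sum of the sizes of all formulae appearing in the derivation). -/
inductive Deriv (R : Formula → Formula → Prop) : Formula → Formula → ℕ → ℕ → Prop
  | refl (a) : Deriv R a a 0 a.size
  | step {a b c l s} : CtxStep R a b → Deriv R b c l s → Deriv R a c (l + 1) (s + a.size)

/-- A single generating equation of the equality relation, in either direction. -/
inductive EqGenSym : Formula → Formula → Prop
  | orComm (a b) : EqGenSym (.or a b) (.or b a)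
  | andComm (a b) : EqGenSym (.and a b) (.and b a)
  | orAssoc (a b c) : EqGenSym (.or (.or a b) c) (.or a (.or b c))
  | orAssoc' (a b c) : EqGenSym (.or a (.or b c)) (.or (.or a b) c)
  | andAssoc (a b c) : EqGenSym (.and (.and a b) c) (.and a (.and b c))
  | andAssoc' (a b c) : EqGenSym (.and a (.and b c)) (.and (.and a b) c)
  | orBot (a) : EqGenSym (.or a .bot) a
  | orBot' (a) : EqGenSym a (.or a .bot)
  | andTop (a) : EqGenSym (.and a .top) a
  | andTop' (a) : EqGenSym a (.and a .top)
  | topTop : EqGenSym (.or .top .top) .top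
  | topTop' : EqGenSym .top (.or .top .top)
  | botBot : EqGenSym (.and .bot .bot) .bot
  | botBot' : EqGenSym .bot (.and .bot .bot)

/-- A chain of rewrite steps (one equation applied inside a context at a time)
in which no step increases the size of the formula. -/
inductive ChainNI : Formula → Formula → ℕ → Prop
  | refl (a) : ChainNI a a 0
  | step {a b c k} : CtxStep EqGenSym a b → b.size ≤ a.size →
      ChainNI b c k → ChainNI a c (k + 1)

/-!
Both connectives are handled uniformly: along its `o`-spine a formula is a list of formulae that
are not `o`-nodes. The canonical form is computed bottom-up; at an `o`-node the spines of the
two canonical children are merged, `o`-units are dropped, copies of the idempotent constant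
(`⊤` for `∨`, `⊥` for `∧`) are merged into one, and the result is sorted and rebuilt as a
right-nested spine. This operation depends only on the multiset of spine elements modulo those
deletions, hence is commutative, associative and unital, so the canonical form is invariant under
the equality relation. Conversely, merging two sorted spines takes linearly many associativity and
commutativity steps, and the deletions are unit and idempotence steps; none of them increases
size, and summing over all nodes gives a quadratic bound.
-/

theorem List.head?_eq_of_mem_of_pairwise_cons {α : Type*} {r : α → α → Prop} [Std.Antisymm r]
    {x : α} {l : List α} (h : (x :: l).Pairwise r) (hx : x ∈ l) : l.head? = some x := by
  cases l with
  | nil => exact absurd hx List.not_mem_nil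
  | cons y l =>
    have hxy : r x y := List.rel_of_pairwise_cons h List.mem_cons_self
    rcases List.mem_cons.mp hx with rfl | hx
    · rfl
    · exact congrArg some (antisymm (List.rel_of_pairwise_cons h.of_cons hx) hxy)

namespace Formula

inductive Conn
  | or
  | and

def node : Conn → Formula → Formula → Formula
  | .or => .or
  | .and => .and

def neutral : Conn → Formula
  | .or => .bot
  | .and => .top

def idem : Conn → Formula
  | .or => .top
  | .and => .bot

def IsLeaf : Formula → Prop
  | .or _ _ => False
  | .and _ _ => False
  | _ => True

def spine : Conn → Formula → List Formula
  | .or, .or a c => spine .or a ++ spine .or c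
  | .and, .and a c => spine .and a ++ spine .and c
  | _, x => [x]

def ofList (o : Conn) : List Formula → Formula
  | [] => neutral o
  | [x] => x
  | x :: l => node o x (ofList o l)

variable {o : Conn}

@[elab_as_elim]
theorem induction_node {motive : Formula → Prop} (leaf : ∀ x, IsLeaf x → motive x)
    (node : ∀ o a c, motive a → motive c → motive (node o a c)) : ∀ x, motive x
  | .or a c => node .or a c (induction_node leaf node a) (induction_node leaf node c)
  | .and a c => node .and a c (induction_node leaf node a) (induction_node leaf node c)
  | .top => leaf _ trivial
  | .bot => leaf _ trivial
  | .atom _ => leaf _ trivial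
  | .natom _ => leaf _ trivial

theorem size_node (o : Conn) (a c : Formula) : (node o a c).size = a.size + c.size := by
  cases o <;> rfl

theorem size_pos (x : Formula) : 0 < x.size := by
  induction x <;> simp only [size] <;> omega

theorem neutral_ne_idem (o : Conn) : neutral o ≠ idem o := by
  cases o <;> simp [neutral, idem]

theorem isLeaf_neutral (o : Conn) : IsLeaf (neutral o) := by
  cases o <;> trivial

theorem isLeaf_idem (o : Conn) : IsLeaf (idem o) := by
  cases o <;> trivial

theorem spine_node_self (o : Conn) (a c : Formula) :
    spine o (node o a c) = spine o a ++ spine o c := by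
  cases o <;> rfl

theorem spine_node_of_ne {o o' : Conn} (h : o ≠ o') (a c : Formula) :
    spine o (node o' a c) = [node o' a c] := by
  cases o <;> cases o' <;> first | rfl | exact absurd rfl h

theorem spine_of_isLeaf {x : Formula} (h : IsLeaf x) : spine o x = [x] := by
  cases o <;> cases x <;> first | rfl | exact h.elim

theorem spine_neutral (o : Conn) : spine o (neutral o) = [neutral o] :=
  spine_of_isLeaf (isLeaf_neutral o)

theorem spine_of_mem_spine {x e : Formula} (he : e ∈ spine o x) : spine o e = [e] := by
  induction x using induction_node with
  | leaf x hx => rw [spine_of_isLeaf hx, List.mem_singleton] at he; rw [he, spine_of_isLeaf hx]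
  | node o' a c iha ihc =>
    by_cases ho : o = o'
    · subst ho
      rw [spine_node_self, List.mem_append] at he
      exact he.elim iha ihc
    · rw [spine_node_of_ne ho, List.mem_singleton] at he
      rw [he, spine_node_of_ne ho]

theorem length_spine_le_size (o : Conn) (x : Formula) : (spine o x).length ≤ x.size := by
  induction x using induction_node with
  | leaf x hx => rw [spine_of_isLeaf hx, List.length_singleton]; exact size_pos x
  | node o' a c iha ihc =>
    by_cases ho : o = o'
    · subst ho
      simp only [spine_node_self, List.length_append, size_node]
      omega
    · rw [spine_node_of_ne ho, List.length_singleton]; exact size_pos _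

theorem ofList_cons (x : Formula) {l : List Formula} (hl : l ≠ []) :
    ofList o (x :: l) = node o x (ofList o l) := by
  cases l with
  | nil => exact absurd rfl hl
  | cons => rfl

theorem spine_ofList {l : List Formula} (hl : l ≠ []) (hatom : ∀ e ∈ l, spine o e = [e]) :
    spine o (ofList o l) = l := by
  induction l with
  | nil => exact absurd rfl hl
  | cons x t ih =>
    rcases eq_or_ne t [] with rfl | ht
    · exact hatom x (by simp)
    · rw [ofList_cons x ht, spine_node_self, hatom x (by simp),
        ih ht fun e he => hatom e (by simp [he])]
      rfl

theorem spine_ofList_of_ne {o o' : Conn} (h : o ≠ o') {l : List Formula} (hl : 2 ≤ l.length) :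
    spine o (ofList o' l) = [ofList o' l] := by
  match l, hl with
  | x :: y :: t, _ => rw [ofList_cons x (List.cons_ne_nil y t), spine_node_of_ne h]

theorem spine_ne_nil (o : Conn) (x : Formula) : spine o x ≠ [] := by
  induction x using induction_node with
  | leaf x hx => simp [spine_of_isLeaf hx]
  | node o' a c iha _ =>
    by_cases ho : o = o'
    · subst ho
      simp [spine_node_self, iha]
    · simp [spine_node_of_ne ho]

def code : Formula → ℕ
  | .top => Nat.pair 0 0
  | .bot => Nat.pair 1 0
  | .atom n => Nat.pair 2 n
  | .natom n => Nat.pair 3 n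
  | .or a c => Nat.pair 4 (Nat.pair a.code c.code)
  | .and a c => Nat.pair 5 (Nat.pair a.code c.code)

theorem code_injective : Function.Injective code := by
  intro x y h
  induction x generalizing y with
  | or a c iha ihc | and a c iha ihc =>
    cases y <;> simp [code, Nat.pair_eq_pair] at h ⊢
    exact ⟨iha h.1, ihc h.2⟩
  | _ => cases y <;> simp_all [code, Nat.pair_eq_pair]

def CodeLE (x y : Formula) : Prop := x.code ≤ y.code

instance : DecidableRel CodeLE := fun x y => inferInstanceAs (Decidable (x.code ≤ y.code))
instance : IsTrans Formula CodeLE := ⟨fun _ _ _ => Nat.le_trans⟩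
instance : Std.Antisymm CodeLE := ⟨fun _ _ h h' => code_injective (Nat.le_antisymm h h')⟩
instance : Std.Total CodeLE := ⟨fun _ _ => Nat.le_total _ _⟩

def reduce (o : Conn) (M : Multiset Formula) : Multiset Formula :=
  M.filter (fun e => e ≠ neutral o ∧ e ≠ idem o) + if idem o ∈ M then {idem o} else 0

def arrange (o : Conn) (M : Multiset Formula) : List Formula :=
  (reduce o M).sort CodeLE

theorem mem_of_mem_reduce {M : Multiset Formula} {e : Formula} (he : e ∈ reduce o M) :
    e ∈ M := by
  unfold reduce at he
  split_ifs at he with h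
  · rcases Multiset.mem_add.mp he with he | he
    · exact Multiset.mem_of_mem_filter he
    · rwa [Multiset.mem_singleton.mp he]
  · exact Multiset.mem_of_mem_filter (by rwa [add_zero] at he)

theorem reduce_reduce_add (o : Conn) (M N : Multiset Formula) :
    reduce o (reduce o M + N) = reduce o (M + N) := by
  unfold reduce
  by_cases hM : idem o ∈ M <;> by_cases hN : idem o ∈ N <;>
    simp [hM, hN, Multiset.filter_add, Multiset.filter_filter, Multiset.filter_singleton]

theorem reduce_singleton (o : Conn) (x : Formula) :
    reduce o {x} = if x = neutral o then 0 else {x} := by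
  unfold reduce
  by_cases hn : x = neutral o
  · subst hn; simp [Multiset.filter_singleton, neutral_ne_idem o, (neutral_ne_idem o).symm]
  · by_cases hi : x = idem o
    · subst hi; simp [Multiset.filter_singleton, (neutral_ne_idem o).symm]
    · simp [Multiset.filter_singleton, hn, hi, Ne.symm hi]

theorem reduce_idem_idem (o : Conn) : reduce o ({idem o} + {idem o}) = {idem o} := by
  simp [reduce, Multiset.filter_singleton]

theorem coe_arrange (o : Conn) (M : Multiset Formula) :
    (arrange o M : Multiset Formula) = reduce o M :=
  Multiset.sort_eq _ _

theorem reduce_reduce (o : Conn) (M : Multiset Formula) : reduce o (reduce o M) = reduce o M := by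
  simpa using reduce_reduce_add o M 0

theorem reduce_add_reduce (o : Conn) (M N : Multiset Formula) :
    reduce o (M + reduce o N) = reduce o (M + N) := by
  rw [add_comm, reduce_reduce_add, add_comm]

theorem arrange_arrange (o : Conn) (M : Multiset Formula) :
    arrange o (arrange o M) = arrange o M := by
  rw [arrange, coe_arrange, reduce_reduce, arrange]

theorem reduce_cons_neutral (o : Conn) (M : Multiset Formula) :
    reduce o (neutral o ::ₘ M) = reduce o M := by
  simp [reduce, neutral_ne_idem o, (neutral_ne_idem o).symm]

theorem reduce_cons_idem {M : Multiset Formula} (h : idem o ∈ M) :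
    reduce o (idem o ::ₘ M) = reduce o M := by
  simp [reduce, h]

theorem reduce_cons {x : Formula} {M : Multiset Formula} (hn : x ≠ neutral o)
    (hi : x = idem o → idem o ∉ M) : reduce o (x ::ₘ M) = x ::ₘ reduce o M := by
  by_cases hx : x = idem o
  · subst hx
    simp [reduce, hi rfl, add_comm]
  · simp [reduce, hn, hx, Ne.symm hx]

/-- The step-by-step form of `reduce` performed by the rewriting: it only looks at neighbours,
so it agrees with `reduce` on sorted lists, where equal elements are adjacent. -/
def collapse (o : Conn) : List Formula → List Formula
  | [] => []
  | x :: l =>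
    if x = neutral o ∨ (x = idem o ∧ l.head? = some (idem o)) then collapse o l
    else x :: collapse o l

theorem collapse_sublist (o : Conn) : ∀ l : List Formula, (collapse o l).Sublist l
  | [] => .slnil
  | x :: l => by
    rw [collapse]
    split_ifs
    · exact (collapse_sublist o l).cons x
    · exact (collapse_sublist o l).cons_cons x

theorem coe_collapse :
    ∀ {l : List Formula}, l.Pairwise CodeLE → (collapse o l : Multiset Formula) = reduce o l
  | [], _ => by simp [collapse, reduce]
  | x :: l, h => by
    rw [collapse, ← Multiset.cons_coe]
    split_ifs with hc
    · rw [coe_collapse h.of_cons]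
      rcases hc with rfl | ⟨rfl, hl⟩
      · exact (reduce_cons_neutral o l).symm
      · exact (reduce_cons_idem (List.mem_of_mem_head? hl)).symm
    · simp only [not_or, not_and] at hc
      rw [← Multiset.cons_coe, coe_collapse h.of_cons, reduce_cons hc.1]
      rintro rfl hmem
      exact hc.2 rfl (List.head?_eq_of_mem_of_pairwise_cons h hmem)

theorem collapse_eq_arrange {l : List Formula} (h : l.Pairwise CodeLE) :
    collapse o l = arrange o l :=
  (Multiset.coe_eq_coe.mp ((coe_collapse h).trans (coe_arrange o l).symm)).eq_of_pairwise'
    (h.sublist (collapse_sublist o l)) (Multiset.pairwise_sort _ _)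

def combine (o : Conn) (X Y : Formula) : Formula :=
  ofList o (arrange o (↑(spine o X) + ↑(spine o Y)))

def canon : Formula → Formula
  | .or a c => combine .or a.canon c.canon
  | .and a c => combine .and a.canon c.canon
  | x => x

theorem canon_node (o : Conn) (a c : Formula) : canon (node o a c) = combine o a.canon c.canon := by
  cases o <;> rfl

theorem canon_of_isLeaf {x : Formula} (h : IsLeaf x) : canon x = x := by
  cases x <;> first | rfl | exact h.elim

theorem mem_spine_of_mem_arrange {X Y e : Formula}
    (he : e ∈ arrange o (↑(spine o X) + ↑(spine o Y))) :
    e ∈ spine o X ∨ e ∈ spine o Y := by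
  simpa using mem_of_mem_reduce ((Multiset.mem_sort _).mp he)

theorem ofList_arrange_of_atomic {x : Formula} (hx : spine o x = [x]) :
    ofList o (arrange o (spine o x)) = x := by
  rw [hx, Multiset.coe_singleton, arrange, reduce_singleton]
  split_ifs with h
  · rw [Multiset.sort_zero, h]; rfl
  · rw [Multiset.sort_singleton]; rfl

inductive IsNF : Formula → Prop
  | leaf {x : Formula} : IsLeaf x → IsNF x
  | node {o : Conn} {l : List Formula} : 2 ≤ l.length → arrange o l = l →
      (∀ e ∈ l, IsNF e) → (∀ e ∈ l, spine o e = [e]) → IsNF (ofList o l)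

variable {X Y : Formula}

theorem IsNF.ofList_arrange_spine (h : IsNF X) : ofList o (arrange o (spine o X)) = X := by
  cases h with
  | leaf hx => exact ofList_arrange_of_atomic (spine_of_isLeaf hx)
  | @node o' l hlen harr _ hatom =>
    by_cases ho : o = o'
    · subst ho
      rw [spine_ofList (List.ne_nil_of_length_pos (by omega)) hatom, harr]
    · exact ofList_arrange_of_atomic (spine_ofList_of_ne ho hlen)

theorem IsNF.of_mem_spine (h : IsNF X) {e : Formula} (he : e ∈ spine o X) : IsNF e := by
  cases h with
  | leaf hx =>
    rw [spine_of_isLeaf hx, List.mem_singleton] at he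
    exact he ▸ .leaf hx
  | @node o' l hlen harr hnf hatom =>
    by_cases ho : o = o'
    · subst ho
      rw [spine_ofList (List.ne_nil_of_length_pos (by omega)) hatom] at he
      exact hnf e he
    · rw [spine_ofList_of_ne ho hlen, List.mem_singleton] at he
      exact he ▸ .node hlen harr hnf hatom

theorem IsNF.ofList_spine (h : IsNF X) : ofList o (spine o X) = X := by
  cases h with
  | leaf hx => rw [spine_of_isLeaf hx]; rfl
  | @node o' l hlen _ _ hatom =>
    by_cases ho : o = o'
    · subst ho
      rw [spine_ofList (List.ne_nil_of_length_pos (by omega)) hatom]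
    · rw [spine_ofList_of_ne ho hlen]; rfl

theorem IsNF.pairwise_spine (h : IsNF X) : (spine o X).Pairwise CodeLE := by
  cases h with
  | leaf hx => rw [spine_of_isLeaf hx]; exact List.pairwise_singleton _ _
  | @node o' l hlen harr _ hatom =>
    by_cases ho : o = o'
    · subst ho
      rw [spine_ofList (List.ne_nil_of_length_pos (by omega)) hatom, ← harr]
      exact Multiset.pairwise_sort _ _
    · rw [spine_ofList_of_ne ho hlen]; exact List.pairwise_singleton _ _

theorem IsNF.combine (hX : IsNF X) (hY : IsNF Y) : IsNF (combine o X Y) := by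
  have hnf : ∀ e ∈ arrange o (↑(spine o X) + ↑(spine o Y)), IsNF e := fun e he =>
    (mem_spine_of_mem_arrange he).elim hX.of_mem_spine hY.of_mem_spine
  have hatom : ∀ e ∈ arrange o (↑(spine o X) + ↑(spine o Y)), spine o e = [e] := fun e he =>
    (mem_spine_of_mem_arrange he).elim spine_of_mem_spine spine_of_mem_spine
  have harr := arrange_arrange o (↑(spine o X) + ↑(spine o Y))
  unfold Formula.combine
  generalize arrange o (↑(spine o X) + ↑(spine o Y)) = l at hnf hatom harr
  match l, hnf, hatom, harr with
  | [], _, _, _ => exact .leaf (isLeaf_neutral o)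
  | [e], hnf, _, _ => exact hnf e (by simp)
  | _ :: _ :: _, hnf, hatom, harr => exact .node (by simp) harr hnf hatom

theorem isNF_canon (x : Formula) : IsNF (canon x) := by
  induction x using induction_node with
  | leaf x hx => rw [canon_of_isLeaf hx]; exact .leaf hx
  | node o a c iha ihc => rw [canon_node]; exact iha.combine ihc

theorem reduce_spine_combine (o : Conn) (X Y : Formula) :
    reduce o (spine o (combine o X Y)) = reduce o (↑(spine o X) + ↑(spine o Y)) := by
  unfold Formula.combine
  rcases eq_or_ne (arrange o (↑(spine o X) + ↑(spine o Y))) [] with h | h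
  · have h0 := coe_arrange o (↑(spine o X) + ↑(spine o Y))
    rw [h] at h0 ⊢
    rw [← h0, ofList, spine_neutral, Multiset.coe_singleton, reduce_singleton, if_pos rfl]
    rfl
  · rw [spine_ofList h fun e he => ?_, coe_arrange, reduce_reduce]
    rcases mem_spine_of_mem_arrange he with he | he <;> exact spine_of_mem_spine he

theorem combine_congr {X Y X' Y' : Formula}
    (h : reduce o (↑(spine o X) + ↑(spine o Y)) =
      reduce o (↑(spine o X') + ↑(spine o Y'))) :
    combine o X Y = combine o X' Y' := by
  rw [combine, combine, arrange, arrange, h]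

theorem combine_comm (o : Conn) (X Y : Formula) : combine o X Y = combine o Y X := by
  rw [combine, combine, add_comm]

theorem combine_assoc (o : Conn) (X Y Z : Formula) :
    combine o (combine o X Y) Z = combine o X (combine o Y Z) := by
  apply combine_congr
  have hl : reduce o (↑(spine o (combine o X Y)) + ↑(spine o Z)) =
      reduce o (↑(spine o X) + ↑(spine o Y) + ↑(spine o Z)) := by
    rw [← reduce_reduce_add, reduce_spine_combine, reduce_reduce_add]
  have hr : reduce o (↑(spine o X) + ↑(spine o (combine o Y Z))) =
      reduce o (↑(spine o X) + (↑(spine o Y) + ↑(spine o Z))) := by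
    rw [← reduce_add_reduce, reduce_spine_combine, reduce_add_reduce]
  rw [hl, hr, add_assoc]

theorem combine_neutral (hX : IsNF X) : combine o X (neutral o) = X := by
  conv_rhs => rw [← hX.ofList_arrange_spine (o := o)]
  rw [combine, arrange, arrange, spine_neutral, Multiset.coe_singleton, ← reduce_add_reduce,
    reduce_singleton, if_pos rfl, add_zero]

theorem combine_idem (o : Conn) : combine o (idem o) (idem o) = idem o := by
  rw [combine, spine_of_isLeaf (isLeaf_idem o), Multiset.coe_singleton, arrange, reduce_idem_idem,
    Multiset.sort_singleton]
  rfl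

theorem canon_eq_of_feq {x y : Formula} (h : FEq x y) : canon x = canon y := by
  induction h with
  | orComm a b | andComm a b => exact combine_comm _ _ _
  | orAssoc a b c | andAssoc a b c => exact combine_assoc _ _ _ _
  | orBot a => exact combine_neutral (o := .or) (isNF_canon a)
  | andTop a => exact combine_neutral (o := .and) (isNF_canon a)
  | topTop => exact combine_idem .or
  | botBot => exact combine_idem .and
  | refl => rfl
  | symm _ ih => exact ih.symm
  | trans _ _ ih ih' => exact ih.trans ih'
  | orCongL c _ ih | orCongR c _ ih | andCongL c _ ih | andCongR c _ ih =>
    simp only [canon, ih]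

end Formula

theorem EqGenSym.feq {x y : Formula} (h : EqGenSym x y) : FEq x y := by
  cases h with
  | orComm a b => exact .orComm a b
  | andComm a b => exact .andComm a b
  | orAssoc a b c => exact .orAssoc a b c
  | orAssoc' a b c => exact .symm (.orAssoc a b c)
  | andAssoc a b c => exact .andAssoc a b c
  | andAssoc' a b c => exact .symm (.andAssoc a b c)
  | orBot => exact .orBot y
  | orBot' => exact .symm (.orBot x)
  | andTop => exact .andTop y
  | andTop' => exact .symm (.andTop x)
  | topTop => exact .topTop
  | topTop' => exact .symm .topTop
  | botBot => exact .botBot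
  | botBot' => exact .symm .botBot

theorem CtxStep.feq {x y : Formula} (h : CtxStep EqGenSym x y) : FEq x y := by
  induction h with
  | base h => exact h.feq
  | orL c _ ih => exact .orCongL c ih
  | orR c _ ih => exact .orCongR c ih
  | andL c _ ih => exact .andCongL c ih
  | andR c _ ih => exact .andCongR c ih

namespace ChainNI

variable {x y z : Formula} {k m : ℕ}

theorem trans (h : ChainNI x y k) (h' : ChainNI y z m) : ChainNI x z (k + m) := by
  induction h with
  | refl => simpa using h'
  | step hs hsize _ ih => simpa [Nat.add_right_comm] using ChainNI.step hs hsize (ih h')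

theorem size_le (h : ChainNI x y k) : y.size ≤ x.size := by
  induction h with
  | refl => exact le_rfl
  | step _ hsize _ ih => exact ih.trans hsize

theorem feq (h : ChainNI x y k) : FEq x y := by
  induction h with
  | refl a => exact .refl a
  | step hs _ _ ih => exact .trans hs.feq ih

theorem node_left (o : Formula.Conn) (z : Formula) (h : ChainNI x y k) :
    ChainNI (Formula.node o x z) (Formula.node o y z) k := by
  induction h with
  | refl => exact .refl _
  | step hs hsize _ ih =>
    refine .step ?_ (by simp only [Formula.size_node]; omega) ih
    cases o
    exacts [.orL z hs, .andL z hs]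

theorem node_right (o : Formula.Conn) (z : Formula) (h : ChainNI x y k) :
    ChainNI (Formula.node o z x) (Formula.node o z y) k := by
  induction h with
  | refl => exact .refl _
  | step hs hsize _ ih =>
    refine .step ?_ (by simp only [Formula.size_node]; omega) ih
    cases o
    exacts [.orR z hs, .andR z hs]

end ChainNI

namespace Formula

def ReachesIn (x y : Formula) (n : ℕ) : Prop :=
  ∃ k ≤ n, ChainNI x y k

namespace ReachesIn

variable {x y z : Formula} {m n : ℕ}

theorem refl (x : Formula) : ReachesIn x x 0 :=
  ⟨0, le_rfl, .refl x⟩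

theorem mono (h : ReachesIn x y m) (hmn : m ≤ n) : ReachesIn x y n :=
  let ⟨k, hk, hc⟩ := h
  ⟨k, hk.trans hmn, hc⟩

theorem trans (h : ReachesIn x y m) (h' : ReachesIn y z n) : ReachesIn x z (m + n) :=
  let ⟨k, hk, hc⟩ := h
  let ⟨k', hk', hc'⟩ := h'
  ⟨k + k', Nat.add_le_add hk hk', hc.trans hc'⟩

theorem single (hs : CtxStep EqGenSym x y) (hsize : y.size ≤ x.size) : ReachesIn x y 1 :=
  ⟨1, le_rfl, .step hs hsize (.refl y)⟩

theorem size_le (h : ReachesIn x y n) : y.size ≤ x.size :=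
  let ⟨_, _, hc⟩ := h
  hc.size_le

theorem feq (h : ReachesIn x y n) : FEq x y :=
  let ⟨_, _, hc⟩ := h
  hc.feq

theorem node_left (o : Conn) (z : Formula) (h : ReachesIn x y n) :
    ReachesIn (node o x z) (node o y z) n :=
  let ⟨k, hk, hc⟩ := h
  ⟨k, hk, hc.node_left o z⟩

theorem node_right (o : Conn) (z : Formula) (h : ReachesIn x y n) :
    ReachesIn (node o z x) (node o z y) n :=
  let ⟨k, hk, hc⟩ := h
  ⟨k, hk, hc.node_right o z⟩

end ReachesIn

variable {o : Conn}

theorem reachesIn_comm (o : Conn) (x y : Formula) : ReachesIn (node o x y) (node o y x) 1 := by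
  refine .single (.base ?_) (by simp only [size_node]; omega)
  cases o
  exacts [.orComm x y, .andComm x y]

theorem reachesIn_assoc (o : Conn) (x y z : Formula) :
    ReachesIn (node o (node o x y) z) (node o x (node o y z)) 1 := by
  refine .single (.base ?_) (by simp only [size_node]; omega)
  cases o
  exacts [.orAssoc x y z, .andAssoc x y z]

theorem reachesIn_assoc' (o : Conn) (x y z : Formula) :
    ReachesIn (node o x (node o y z)) (node o (node o x y) z) 1 := by
  refine .single (.base ?_) (by simp only [size_node]; omega)
  cases o
  exacts [.orAssoc' x y z, .andAssoc' x y z]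

theorem reachesIn_neutral (o : Conn) (x : Formula) : ReachesIn (node o x (neutral o)) x 1 := by
  refine .single (.base ?_) (by simp only [size_node]; omega)
  cases o
  exacts [.orBot x, .andTop x]

theorem reachesIn_idem (o : Conn) : ReachesIn (node o (idem o) (idem o)) (idem o) 1 := by
  refine .single (.base ?_) (by simp only [size_node]; omega)
  cases o
  exacts [.topTop, .botBot]

theorem reachesIn_merge :
    ∀ xs ys : List Formula, xs ≠ [] → ys ≠ [] →
      ReachesIn (node o (ofList o xs) (ofList o ys)) (ofList o (xs.merge ys (CodeLE · ·)))
        (3 * (xs.length + ys.length))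
  | x :: xs, y :: ys, _, _ => by
    have hne : ∀ {l r : List Formula}, l ≠ [] → l.merge r (CodeLE · ·) ≠ [] := fun hl =>
      List.ne_nil_of_length_pos (by
        rw [List.length_merge]
        exact Nat.add_pos_left (List.length_pos_iff.mpr hl) _)
    by_cases hxy : CodeLE x y
    · rw [List.cons_merge_cons_pos _ _ _ (decide_eq_true hxy)]
      rcases eq_or_ne xs [] with rfl | hxs
      · rw [List.nil_merge, ofList_cons x (List.cons_ne_nil y ys)]
        exact (ReachesIn.refl _).mono (Nat.zero_le _)
      · rw [ofList_cons x hxs, ofList_cons x (hne hxs)]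
        refine ((reachesIn_assoc o _ _ _).trans
          ((reachesIn_merge xs (y :: ys) hxs (List.cons_ne_nil y ys)).node_right o x)).mono ?_
        simp only [List.length_cons]
        omega
    · rw [List.cons_merge_cons_neg _ _ _ (by simpa using hxy)]
      rcases eq_or_ne ys [] with rfl | hys
      · rw [List.merge_right, ofList_cons y (List.cons_ne_nil x xs)]
        exact (reachesIn_comm o _ _).mono (by simp only [List.length_cons]; omega)
      · rw [ofList_cons y hys, ofList_cons y (hne (List.cons_ne_nil x xs))]
        refine ((((reachesIn_assoc' o _ _ _).trans ((reachesIn_comm o _ _).node_left o _)).trans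
          (reachesIn_assoc o _ _ _)).trans
          ((reachesIn_merge (x :: xs) ys (List.cons_ne_nil x xs) hys).node_right o y)).mono ?_
        simp only [List.length_cons]
        omega
termination_by xs ys => xs.length + ys.length

theorem reachesIn_ofList_neutral_cons (o : Conn) (l : List Formula) :
    ReachesIn (ofList o (neutral o :: l)) (ofList o l) 2 := by
  rcases eq_or_ne l [] with rfl | hl
  · exact (ReachesIn.refl _).mono (Nat.zero_le _)
  · rw [ofList_cons _ hl]
    exact (reachesIn_comm o _ _).trans (reachesIn_neutral o _)

theorem reachesIn_ofList_idem_idem_cons (o : Conn) (l : List Formula) :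
    ReachesIn (ofList o (idem o :: idem o :: l)) (ofList o (idem o :: l)) 2 := by
  rcases eq_or_ne l [] with rfl | hl
  · exact (reachesIn_idem o).mono (by omega)
  · rw [ofList_cons _ (List.cons_ne_nil _ l), ofList_cons _ hl]
    exact (reachesIn_assoc' o _ _ _).trans ((reachesIn_idem o).node_left o _)

theorem reachesIn_node_ofList (o : Conn) (x : Formula) (l : List Formula) :
    ReachesIn (node o x (ofList o l)) (ofList o (x :: l)) 1 := by
  rcases eq_or_ne l [] with rfl | hl
  · exact reachesIn_neutral o x
  · rw [ofList_cons x hl]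
    exact (ReachesIn.refl _).mono (Nat.zero_le _)

theorem reachesIn_collapse (o : Conn) :
    ∀ l : List Formula, ReachesIn (ofList o l) (ofList o (collapse o l)) (2 * l.length)
  | [] => ReachesIn.refl _
  | x :: l => by
    rw [collapse]
    split_ifs with hc
    · rcases hc with rfl | ⟨rfl, hl⟩
      · exact ((reachesIn_ofList_neutral_cons o l).trans (reachesIn_collapse o l)).mono
          (by simp only [List.length_cons]; omega)
      · obtain ⟨l, rfl⟩ : ∃ l', l = idem o :: l' := List.head?_eq_some_iff.mp hl
        exact ((reachesIn_ofList_idem_idem_cons o l).trans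
          (reachesIn_collapse o (idem o :: l))).mono (by simp only [List.length_cons]; omega)
    · rcases eq_or_ne l [] with rfl | hl
      · exact (ReachesIn.refl _).mono (Nat.zero_le _)
      · rw [ofList_cons x hl]
        exact (((reachesIn_collapse o l).node_right o x).trans (reachesIn_node_ofList o x _)).mono
          (by simp only [List.length_cons]; omega)

theorem reachesIn_combine {A C : Formula} (hA : IsNF A) (hC : IsNF C) :
    ReachesIn (node o A C) (combine o A C) (5 * (A.size + C.size)) := by
  have hmerge :=
    reachesIn_merge (o := o) (spine o A) (spine o C) (spine_ne_nil o A) (spine_ne_nil o C)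
  rw [hA.ofList_spine, hC.ofList_spine] at hmerge
  have hcollapse := reachesIn_collapse o ((spine o A).merge (spine o C) (CodeLE · ·))
  rw [collapse_eq_arrange (hA.pairwise_spine.merge hC.pairwise_spine),
    Multiset.coe_eq_coe.mpr (List.merge_perm_append _), ← Multiset.coe_add] at hcollapse
  refine (hmerge.trans hcollapse).mono ?_
  have := length_spine_le_size o A
  have := length_spine_le_size o C
  simp only [List.length_merge]
  omega

theorem reachesIn_canon (x : Formula) : ReachesIn x (canon x) (5 * x.size ^ 2) := by
  induction x using induction_node with
  | leaf x hx => rw [canon_of_isLeaf hx]; exact (ReachesIn.refl x).mono (Nat.zero_le _)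
  | node o a c iha ihc =>
    rw [canon_node, size_node]
    refine (((iha.node_left o c).trans (ihc.node_right o a.canon)).trans
      (reachesIn_combine (isNF_canon a) (isNF_canon c))).mono ?_
    have := iha.size_le
    have := ihc.size_le
    nlinarith [size_pos a, size_pos c]

theorem feq_iff_canon_eq {x y : Formula} : FEq x y ↔ canon x = canon y :=
  ⟨canon_eq_of_feq, fun h =>
    (reachesIn_canon x).feq.trans (h ▸ (reachesIn_canon y).feq.symm)⟩

end Formula

/-- Remark RemEq: the equality relation is decidable, and any two
equal formulae reach a common canonical form by `O(n²)` size-nonincreasing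
rewrite steps. -/
theorem feq_decidable_canonical :
    (∃ f : Formula → Formula → Bool, ∀ α β : Formula, FEq α β ↔ f α β = true) ∧
    ∃ C : ℕ, ∀ α β : Formula, FEq α β →
      ∃ (δ : Formula) (k₁ k₂ : ℕ),
        ChainNI α δ k₁ ∧ ChainNI β δ k₂ ∧
        k₁ + k₂ ≤ C * (α.size + β.size) ^ 2 := by
  refine ⟨⟨fun α β => decide (α.canon = β.canon), fun α β => ?_⟩, 5,
    fun α β hαβ => ?_⟩
  · rw [decide_eq_true_iff]
    exact Formula.feq_iff_canon_eq
  · obtain ⟨k₁, hk₁, h₁⟩ := Formula.reachesIn_canon α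
    obtain ⟨k₂, hk₂, h₂⟩ := Formula.reachesIn_canon β
    refine ⟨α.canon, k₁, k₂, h₁, Formula.canon_eq_of_feq hαβ ▸ h₂, ?_⟩
    nlinarith [Nat.zero_le (α.size * β.size)]
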